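/- arXiv:1601.01068 — 2 statements merged into one kernel-verified Lean document; each statement's English description precedes it below -/
import Mathlib

section
/- Let H ⊇ V_h be complex inner-product spaces where V_h is a finite-dimensional subspace, let A_h be a Hermitian sesquilinear form on H + V_h which is an inner product on V_h with norm ‖·‖_h, let F be a conjugate-linear functional, let ψ ∈ H satisfy a consistency relation with consistency term D_h(ψ, v) := F(v) − A_h(ψ, v) for v ∈ V_h, and let ψ_h ∈ V_h satisfy A_h(ψ_h, v) = F(v) for all v ∈ V_h. Assume A_h is bounded on (H + V_h) with respect to ‖·‖_h. Then ‖ψ − ψ_h‖_h ≤ C ( inf_{v ∈ V_h} ‖ψ − v‖_h + sup_{0 ≠ v ∈ V_h} |D_h(ψ, v)| / ‖v‖_h ), and conversely inf_{v ∈ V_h} ‖ψ − v‖_h + sup_{0 ≠ v ∈ V_h} |D_h(ψ, v)|/‖v‖_h ≤ C' ‖ψ − ψ_h‖_h. -/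
open scoped ComplexConjugate

/-- Generalized Strang lemma (Lemma 3.1): two-sided bound for the error of a
nonconforming Galerkin approximation `ψ_h ∈ V_h` of `ψ` in terms of the best
approximation error and the consistency term
`D_h ψ v = F v - A_h ψ v`. -/
theorem strang_lemma
    {X : Type*} [AddCommGroup X] [Module ℂ X]
    (Vh : Submodule ℂ X) [FiniteDimensional ℂ Vh]
    (Ah : X →ₗ[ℂ] X →ₗ⋆[ℂ] ℂ)
    (hherm : ∀ w z, Ah w z = conj (Ah z w))
    (nh : X → ℝ) (hnh : ∀ w, nh w = Real.sqrt (Ah w w).re)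
    (hpos : ∀ v ∈ Vh, v ≠ 0 → 0 < nh v)
    (M : ℝ) (hM : 0 < M) (hbdd : ∀ w z, ‖Ah w z‖ ≤ M * nh w * nh z)
    (F : X → ℂ)
    (hFadd : ∀ v v', F (v + v') = F v + F v')
    (hFsmul : ∀ (c : ℂ) v, F (c • v) = conj c * F v)
    (ψ : X) (Dh : X → ℂ) (hDh : ∀ v, Dh v = F v - Ah ψ v)
    (ψh : X) (hψh : ψh ∈ Vh) (hGal : ∀ v ∈ Vh, Ah ψh v = F v) :
    (∃ C : ℝ, 0 < C ∧
      nh (ψ - ψh) ≤ C * (sInf {r : ℝ | ∃ v ∈ Vh, r = nh (ψ - v)} +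
        sSup {r : ℝ | ∃ v ∈ Vh, v ≠ 0 ∧ r = ‖Dh v‖ / nh v})) ∧
    (∃ C' : ℝ, 0 < C' ∧
      sInf {r : ℝ | ∃ v ∈ Vh, r = nh (ψ - v)} +
        sSup {r : ℝ | ∃ v ∈ Vh, v ≠ 0 ∧ r = ‖Dh v‖ / nh v} ≤
          C' * nh (ψ - ψh)) := by
  set e := ψ - ψh with he
  set setI := {r : ℝ | ∃ v ∈ Vh, r = nh (ψ - v)} with hsetI
  set setS := {r : ℝ | ∃ v ∈ Vh, v ≠ 0 ∧ r = ‖Dh v‖ / nh v} with hsetS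
  -- basic facts about nh
  have hnn : ∀ w, 0 ≤ nh w := fun w => (hnh w) ▸ Real.sqrt_nonneg _
  have hrele : ∀ w, (Ah w w).re ≤ nh w ^ 2 := by
    intro w
    by_cases h : 0 ≤ (Ah w w).re
    · rw [hnh, Real.sq_sqrt h]
    · have : 0 ≤ nh w ^ 2 := sq_nonneg _
      linarith
  have hnhneg : ∀ x, nh (-x) = nh x := by
    intro x
    rw [hnh, hnh]
    congr 2
    simp [map_neg, LinearMap.neg_apply]
  -- Galerkin orthogonality : for v ∈ Vh, Dh v = -(Ah e v)
  have hDnegE : ∀ v ∈ Vh, Dh v = -((Ah e) v) := by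
    intro v hv
    rw [hDh, ← hGal v hv, he]
    simp [map_sub, LinearMap.sub_apply]
  -- elements of setS are nonnegative
  have hSnonneg : ∀ r ∈ setS, 0 ≤ r := by
    rintro r ⟨v, hv, hv0, rfl⟩
    exact div_nonneg (norm_nonneg _) (hnn v)
  -- setS is bounded above by M * nh e
  have hSbound : ∀ r ∈ setS, r ≤ M * nh e := by
    rintro r ⟨v, hv, hv0, rfl⟩
    have hnv : 0 < nh v := hpos v hv hv0
    rw [div_le_iff₀ hnv]
    calc ‖Dh v‖ = ‖(Ah e) v‖ := by rw [hDnegE v hv, norm_neg]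
      _ ≤ M * nh e * nh v := hbdd e v
  have hSbdd : BddAbove setS := ⟨M * nh e, hSbound⟩
  set S := sSup setS with hS
  have hS0 : 0 ≤ S := Real.sSup_nonneg hSnonneg
  have hSle : S ≤ M * nh e := Real.sSup_le hSbound (mul_nonneg hM.le (hnn e))
  -- setI is nonempty and bounded below
  have hInonempty : setI.Nonempty := ⟨nh (ψ - ψh), ψh, hψh, rfl⟩
  have hIbdd : BddBelow setI := by
    refine ⟨0, ?_⟩
    rintro r ⟨v, hv, rfl⟩
    exact hnn _
  set I := sInf setI with hI
  set C : ℝ := Real.sqrt (1 + M) * (1 + M) with hC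
  have h1M : (0:ℝ) < 1 + M := by linarith
  have hCpos : 0 < C := by positivity
  -- key estimate : for all v ∈ Vh, nh e ≤ C * (nh (ψ - v) + S)
  have key : ∀ v ∈ Vh, nh e ≤ C * (nh (ψ - v) + S) := by
    intro v hv
    set x := ψ - v with hx
    set w := v - ψh with hw
    have hwVh : w ∈ Vh := Vh.sub_mem hv hψh
    have hxw : e = x + w := by rw [he, hx, hw]; abel
    set a := nh x with ha
    set b := nh w with hb
    have ha0 : 0 ≤ a := hnn x
    have hb0 : 0 ≤ b := hnn w
    -- Claim A : b ≤ M * a + S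
    have claimA : b ≤ M * a + S := by
      by_cases hw0 : w = 0
      · have : b = 0 := by
          rw [hb, hw0, hnh]
          simp
        rw [this]
        positivity
      · have hbpos : 0 < b := hpos w hwVh hw0
        have hre : 0 < (Ah w w).re := by
          have := hbpos
          rw [hb, hnh, Real.sqrt_pos] at this
          exact this
        have hsq : b ^ 2 = (Ah w w).re := by
          rw [hb, hnh, Real.sq_sqrt hre.le]
        -- Ah w w = Ah (v - ψ) w + Ah e w  and Ah e w = -(Dh w)
        have hsplit : Ah w w = Ah (v - ψ) w + Ah e w := by
          have : w = (v - ψ) + e := by rw [hw, he]; abel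
          nth_rewrite 1 [this]
          simp [map_add, LinearMap.add_apply]
        have hAe : (Ah e) w = -(Dh w) := by
          rw [hDnegE w hwVh]; ring
        have hDw : ‖Dh w‖ / b ≤ S := le_csSup hSbdd ⟨w, hwVh, hw0, rfl⟩
        have hnvψ : nh (v - ψ) = a := by
          rw [ha, hx, ← hnhneg (v - ψ), neg_sub]
        have hbound1 : (Ah w w).re ≤ M * a * b + ‖Dh w‖ := by
          rw [hsplit, Complex.add_re]
          have h1 : (Ah (v - ψ) w).re ≤ ‖Ah (v - ψ) w‖ := Complex.re_le_norm _
          have h2 : ((Ah e) w).re ≤ ‖(Ah e) w‖ := Complex.re_le_norm _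
          have h3 : ‖Ah (v - ψ) w‖ ≤ M * a * b := by
            have := hbdd (v - ψ) w
            rwa [hnvψ] at this
          have h4 : ‖(Ah e) w‖ = ‖Dh w‖ := by rw [hAe, norm_neg]
          linarith
        have hq : ‖Dh w‖ / b * b = ‖Dh w‖ := div_mul_cancel₀ _ (ne_of_gt hbpos)
        nlinarith [hDw, hbpos, sq_nonneg b]
    -- Claim B : nh e ≤ sqrt (1+M) * (a + b)
    have claimB : nh e ≤ Real.sqrt (1 + M) * (a + b) := by
      have hexp : Ah (x + w) (x + w) = Ah x x + Ah x w + Ah w x + Ah w w := by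
        simp only [map_add, LinearMap.add_apply]
        ring
      have hre : (Ah e e).re ≤ (1 + M) * (a + b) ^ 2 := by
        rw [hxw, hexp]
        simp only [Complex.add_re]
        have h1 : (Ah x x).re ≤ a ^ 2 := hrele x
        have h2 : (Ah w w).re ≤ b ^ 2 := hrele w
        have h3 : (Ah x w).re ≤ M * a * b :=
          le_trans (Complex.re_le_norm _) (hbdd x w)
        have h4 : (Ah w x).re ≤ M * b * a :=
          le_trans (Complex.re_le_norm _) (hbdd w x)
        nlinarith [mul_nonneg ha0 hb0]
      calc nh e = Real.sqrt (Ah e e).re := hnh e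
        _ ≤ Real.sqrt ((1 + M) * (a + b) ^ 2) := Real.sqrt_le_sqrt hre
        _ = Real.sqrt (1 + M) * (a + b) := by
            rw [Real.sqrt_mul h1M.le, Real.sqrt_sq (by positivity)]
    have hs1 : (0:ℝ) ≤ Real.sqrt (1 + M) := Real.sqrt_nonneg _
    calc nh e ≤ Real.sqrt (1 + M) * (a + b) := claimB
      _ ≤ Real.sqrt (1 + M) * (a + (M * a + S)) := by nlinarith [claimA]
      _ ≤ C * (a + S) := by rw [hC]; nlinarith [mul_nonneg hM.le hS0]
  constructor
  · refine ⟨C, hCpos, ?_⟩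
    have hInf : nh e / C - S ≤ I := by
      apply le_csInf hInonempty
      rintro r ⟨v, hv, rfl⟩
      have := key v hv
      rw [sub_le_iff_le_add, div_le_iff₀ hCpos]
      nlinarith
    have : nh e / C ≤ I + S := by linarith
    calc nh e = nh e / C * C := by field_simp
      _ ≤ (I + S) * C := by nlinarith
      _ = C * (I + S) := by ring
  · refine ⟨1 + M, h1M, ?_⟩
    have hIle : I ≤ nh e := csInf_le hIbdd ⟨ψh, hψh, rfl⟩
    linarith
end

section
/- Let V be a complex Hilbert space with inner product A, B a bounded sesquilinear form on V, T the solution operator A(Tf, v) = B(f,v), and suppose T u = λ⁻¹ u with ‖T − T_h‖ → 0 where T_h are operators with T_h u_h = λ_h⁻¹ u_h, λ_h → λ, ‖u_h‖ = 1, and ‖u_h − u‖_{H₁} ≤ ε₁ in a weaker norm ‖·‖_{H₁}, and T_h is uniformly bounded from ‖·‖_{H₁} to the strong norm ‖·‖_h. Then ‖u_h − u‖_h ≤ C( |λ| ‖(T − T_h) u‖_h + ‖λ_h u_h − λ u‖_{H₁} ). -/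
theorem sub_eq_of_apply_eq_inv_smul {K V : Type*} [Field K] [AddCommGroup V]
    [Module K V] {T Th : V →ₗ[K] V} {lam lamh : K} (hlam : lam ≠ 0) (hlamh : lamh ≠ 0)
    {u uh : V} (hu : T u = lam⁻¹ • u) (huh : Th uh = lamh⁻¹ • uh) :
    uh - u = Th (lamh • uh - lam • u) - lam • (T u - Th u) := by
  simp only [map_sub, map_smul, huh, hu, smul_sub, smul_smul, mul_inv_cancel₀ hlamh,
    mul_inv_cancel₀ hlam, one_smul]
  abel

theorem add_mul_le_max_one_mul_add {a x y : ℝ} (hx : 0 ≤ x) (hy : 0 ≤ y) :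
    a * x + y ≤ max a 1 * (y + x) := by
  have hax : a * x ≤ max a 1 * x := mul_le_mul_of_nonneg_right (le_max_left _ _) hx
  have hy' : y ≤ max a 1 * y := le_mul_of_one_le_left hy (le_max_right _ _)
  linarith

theorem eigenfunction_bootstrap_estimate_general
    {V : Type*} [NormedAddCommGroup V] [NormedSpace ℂ V]
    (N1 : V → ℝ) (hN1 : ∀ v, 0 ≤ N1 v)
    (T Th : V →L[ℂ] V) (lam lamh : ℂ) (hlam : lam ≠ 0) (hlamh : lamh ≠ 0)
    (u uh : V) (hu : T u = lam⁻¹ • u) (huh : Th uh = lamh⁻¹ • uh)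
    (Cb : ℝ) (hbdd : ∀ v, ‖Th v‖ ≤ Cb * N1 v) :
    ‖uh - u‖ ≤ max Cb 1 * (‖lam‖ * ‖(T - Th) u‖ + N1 (lamh • uh - lam • u)) := by
  have split : uh - u = Th (lamh • uh - lam • u) - lam • (T - Th) u :=
    sub_eq_of_apply_eq_inv_smul (T := T.toLinearMap) (Th := Th.toLinearMap)
      hlam hlamh hu huh
  calc ‖uh - u‖ ≤ ‖Th (lamh • uh - lam • u)‖ + ‖lam • (T - Th) u‖ := by
        rw [split]; exact norm_sub_le _ _
    _ ≤ Cb * N1 (lamh • uh - lam • u) + ‖lam‖ * ‖(T - Th) u‖ := by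
        rw [norm_smul]; gcongr; exact hbdd _
    _ ≤ max Cb 1 * (‖lam‖ * ‖(T - Th) u‖ + N1 (lamh • uh - lam • u)) :=
        add_mul_le_max_one_mul_add (hN1 _) (by positivity)

/-- The bootstrap estimate (4.16): writing `u_h - u = λ_h T_h u_h - λ T u`, the
strong-norm eigenfunction error is controlled by the operator approximation error
on the exact eigenfunction plus the weak-norm eigenfunction error, using the
uniform `H₁ → h` boundedness of `T_h`. -/
theorem eigenfunction_bootstrap_estimate
    {V : Type*} [NormedAddCommGroup V] [NormedSpace ℂ V]
    (N1 : V → ℝ) (hN1 : ∀ v, 0 ≤ N1 v)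
    (T Th : V →L[ℂ] V) (lam lamh : ℂ) (hlam : lam ≠ 0) (hlamh : lamh ≠ 0)
    (u uh : V) (hu : T u = lam⁻¹ • u) (huh : Th uh = lamh⁻¹ • uh)
    (hnorm : ‖uh‖ = 1)
    (Cb : ℝ) (hCb : 0 < Cb) (hbdd : ∀ v, ‖Th v‖ ≤ Cb * N1 v) :
    ‖uh - u‖ ≤ max Cb 1 * (‖lam‖ * ‖(T - Th) u‖ + N1 (lamh • uh - lam • u)) :=
  eigenfunction_bootstrap_estimate_general N1 hN1 T Th lam lamh hlam hlamh u uh hu huh Cb hbdd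
end
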